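/- Let F be a number field Galois over Q of degree p^n (p ≥ 5 prime) with p totally ramified (unique prime 𝔭 above p) and 2 inert (𝔮 = 2O_F). If λ, μ ∈ O_F with λ + μ = 1, ord_𝔮(λ) ≥ 2, and μ a unit, then 𝔭 divides λ, which contradicts λ being a {𝔮}-unit; hence no {𝔮}-unit solution has ord_𝔮(λ) ≥ 2. -/

import Mathlib

/-!
Since `λ ∈ 𝔮² = (4)`, the unit `μ` is `≡ 1 (mod 4)`, and so are all its Galois conjugates (the
ideal `(4)` is Galois-stable); hence `N(μ) ≡ 1 (mod 4)`, and as `N(μ) = ±1` and `2` is not a unit,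
`N(μ) = 1`. Total ramification makes `𝔭` Galois-stable with residue field `𝔽_p`, so `μ ≡ m (mod 𝔭)`
for an integer `m` fixed by the Galois group, and `1 = N(μ) ≡ m ^ (p ^ n) ≡ m (mod 𝔭)` by Fermat.
Thus `λ = 1 - μ ∈ 𝔭`. If `(λ) = 𝔮 ^ a`, then `2 ∈ 𝔮 ⊆ 𝔭`, which is impossible since `p ∈ 𝔭` is odd.
-/

open NumberField FractionalIdeal

theorem exists_intCast_eq_of_natCard_eq_prime {A : Type*} [Ring A] {p : ℕ} [hp : Fact p.Prime]
    (hA : Nat.card A = p) (a : A) : ∃ m : ℤ, (m : A) = a := by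
  have : Finite A := Nat.finite_of_card_ne_zero (hA ▸ hp.out.ne_zero)
  have : Nontrivial A := Finite.one_lt_card_iff_nontrivial.mp (hA ▸ hp.out.one_lt)
  obtain ⟨m, hm⟩ := mem_zmultiples_of_prime_card hA (one_ne_zero (α := A)) (g' := a)
  exact ⟨m, by simpa using hm⟩

theorem charP_of_natCard_eq_prime {A : Type*} [Ring A] {p : ℕ} [hp : Fact p.Prime]
    (hA : Nat.card A = p) : CharP A p :=
  have : Fintype A := @Fintype.ofFinite A (Nat.finite_of_card_ne_zero (hA ▸ hp.out.ne_zero))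
  charP_of_card_eq_prime (Fintype.card_eq_nat_card.trans hA)

theorem intCast_pow_prime_pow {A : Type*} [Ring A] {p : ℕ} [Fact p.Prime] [CharP A p]
    (m : ℤ) (k : ℕ) : (m : A) ^ p ^ k = m := by
  rw [← map_intCast (ZMod.castHom dvd_rfl A), ← map_pow, ZMod.pow_card_pow]

theorem neg_one_ne_one_quotient_span_four {R : Type*} [CommRing R] [IsDomain R] [NeZero (2 : R)]
    (h2 : ¬IsUnit (2 : R)) : (-1 : R ⧸ Ideal.span {(4 : R)}) ≠ 1 := by
  intro h
  obtain ⟨d, hd⟩ : ∃ d, d * 4 = (1 : R) - -1 :=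
    Ideal.mem_span_singleton'.mp (Ideal.Quotient.eq.mp (by simpa using h.symm))
  have hd' : (2 : R) * (1 - 2 * d) = 0 := by linear_combination -hd
  have hunit : 1 - 2 * d = 0 := (mul_eq_zero.mp hd').resolve_left two_ne_zero
  exact h2 (.of_mul_eq_one d (by linear_combination -hunit))

theorem Ideal.map_span_natCast {R S : Type*} [CommRing R] [CommRing S] {F : Type*} [FunLike F R S]
    [RingHomClass F R S] (σ : F) (k : ℕ) : (span {(k : R)}).map σ = span {(k : S)} := by
  rw [map_span, Set.image_singleton, map_natCast]

theorem Ideal.map_le_self_of_span_natCast_eq_pow {R : Type*} [CommRing R] {P : Ideal R} [P.IsPrime]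
    {p k : ℕ} (hk : k ≠ 0) (h : span {(p : R)} = P ^ k) {F : Type*} [FunLike F R R]
    [RingHomClass F R R] (σ : F) : P.map σ ≤ P :=
  IsPrime.le_of_pow_le (n := k) <| by
    rw [← Ideal.map_pow, ← h, map_span_natCast, h]
    exact pow_le_self hk

theorem Ideal.span_singleton_ne_pow_of_mem_of_not_le {R : Type*} [CommRing R] {P Q : Ideal R}
    [P.IsPrime] (hQP : ¬Q ≤ P) {x : R} (hx : x ∈ P) (k : ℕ) : span {x} ≠ Q ^ k :=
  fun h ↦ hQP (IsPrime.le_of_pow_le (h ▸ (span_singleton_le_iff_mem P).mpr hx))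

theorem Ideal.natCard_quotient_eq_of_span_natCast_eq_pow_finrank {K : Type*} [Field K]
    [NumberField K] {P : Ideal (𝓞 K)} {p : ℕ} (h : span {(p : 𝓞 K)} = P ^ Module.finrank ℚ K) :
    Nat.card (𝓞 K ⧸ P) = p := by
  have h' := congrArg absNorm h
  rw [absNorm_span_natCast, map_pow, RingOfIntegers.rank] at h'
  rw [← Submodule.cardQuot_apply, ← absNorm_apply]
  exact (Nat.pow_left_injective Module.finrank_pos.ne' h').symm

section Galois

variable {F : Type*} [Field F] [NumberField F] [IsGalois ℚ F]

theorem RingOfIntegers.intCast_norm_eq_prod_galRestrict (x : 𝓞 F) :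
    ((Algebra.norm ℤ x : ℤ) : 𝓞 F) = ∏ σ : F ≃ₐ[ℚ] F, galRestrict ℤ ℚ F (𝓞 F) σ x := by
  rw [prod_galRestrict_eq_norm ℤ ℚ F (𝓞 F) x, eq_intCast]
  congr 1
  apply Int.cast_injective (α := ℚ)
  rw [Algebra.coe_norm_int]
  exact (IsIntegralClosure.algebraMap_mk' (R := ℤ) ℤ _ _).symm

theorem RingOfIntegers.intCast_norm_eq_pow_of_map_le {I : Ideal (𝓞 F)}
    (hI : ∀ σ : F ≃ₐ[ℚ] F, I.map (galRestrict ℤ ℚ F (𝓞 F) σ) ≤ I) {x : 𝓞 F} {m : ℤ}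
    (hx : Ideal.Quotient.mk I x = m) :
    (Algebra.norm ℤ x : 𝓞 F ⧸ I) = (m : 𝓞 F ⧸ I) ^ Module.finrank ℚ F := by
  have hσ (σ : F ≃ₐ[ℚ] F) : Ideal.Quotient.mk I (galRestrict ℤ ℚ F (𝓞 F) σ x) = m := by
    rw [← map_intCast (Ideal.Quotient.mk I), Ideal.Quotient.eq] at hx ⊢
    simpa only [map_sub, map_intCast] using hI σ (Ideal.mem_map_of_mem _ hx)
  rw [← map_intCast (Ideal.Quotient.mk I), intCast_norm_eq_prod_galRestrict, map_prod,
    Finset.prod_congr rfl fun σ _ ↦ hσ σ, Finset.prod_const, Finset.card_univ,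
    ← Nat.card_eq_fintype_card, IsGalois.card_aut_eq_finrank]

theorem RingOfIntegers.norm_eq_one_of_mk_span_four_eq_one (h2 : ¬IsUnit (2 : 𝓞 F)) {x : 𝓞 F}
    (hx : IsUnit x) (h4 : Ideal.Quotient.mk (Ideal.span {(4 : 𝓞 F)}) x = 1) :
    Algebra.norm ℤ x = 1 := by
  have hstable (σ : F ≃ₐ[ℚ] F) :
      (Ideal.span {(4 : 𝓞 F)}).map (galRestrict ℤ ℚ F (𝓞 F) σ) ≤ Ideal.span {(4 : 𝓞 F)} := by
    simpa only [Nat.cast_ofNat] using (Ideal.map_span_natCast (galRestrict ℤ ℚ F (𝓞 F) σ) 4).le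
  have hnorm := intCast_norm_eq_pow_of_map_le hstable (m := 1) (by rw [h4, Int.cast_one])
  rcases Int.isUnit_iff.mp (hx.map (Algebra.norm ℤ)) with h1 | h1
  · exact h1
  · rw [h1, Int.cast_one, one_pow, Int.cast_neg, Int.cast_one] at hnorm
    exact absurd hnorm (neg_one_ne_one_quotient_span_four h2)

theorem RingOfIntegers.mk_eq_one_of_norm_eq_one {p n : ℕ} [hp : Fact p.Prime]
    (hdeg : Module.finrank ℚ F = p ^ n) {P : Ideal (𝓞 F)} [P.IsPrime]
    (hram : Ideal.span {(p : 𝓞 F)} = P ^ p ^ n) {x : 𝓞 F} (hx : Algebra.norm ℤ x = 1) :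
    Ideal.Quotient.mk P x = 1 := by
  have hcard : Nat.card (𝓞 F ⧸ P) = p :=
    Ideal.natCard_quotient_eq_of_span_natCast_eq_pow_finrank (hdeg ▸ hram)
  have : CharP (𝓞 F ⧸ P) p := charP_of_natCard_eq_prime hcard
  obtain ⟨m, hm⟩ := exists_intCast_eq_of_natCard_eq_prime hcard (Ideal.Quotient.mk P x)
  have hnorm := intCast_norm_eq_pow_of_map_le
    (fun σ ↦ Ideal.map_le_self_of_span_natCast_eq_pow (pow_ne_zero n hp.out.ne_zero) hram
      (galRestrict ℤ ℚ F (𝓞 F) σ)) hm.symm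
  -- `1 = N(x) ≡ m ^ (p ^ n) ≡ m ≡ x (mod P)`
  rwa [hx, Int.cast_one, hdeg, intCast_pow_prime_pow, hm, eq_comm] at hnorm

end Galois

theorem stmt19_general (p n : ℕ) (hp : p.Prime) (hp5 : 5 ≤ p)
    (F : Type*) [Field F] [NumberField F] [IsGalois ℚ F]
    (hdeg : Module.finrank ℚ F = p ^ n)
    (P : Ideal (𝓞 F)) (hP : P.IsPrime)
    (hram : Ideal.span {(p : 𝓞 F)} = P ^ (p ^ n))
    (Q : Ideal (𝓞 F)) (hQ : Q = Ideal.span {(2 : 𝓞 F)}) (hQprime : Q.IsPrime)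
    (lam mu : 𝓞 F) (hsum : lam + mu = 1) (hval : lam ∈ Q ^ 2) (hmu : IsUnit mu) :
    lam ∈ P ∧
    ∀ a : ℤ, 2 ≤ a →
      spanSingleton (nonZeroDivisors (𝓞 F)) (algebraMap (𝓞 F) F lam)
        ≠ (Q : FractionalIdeal (nonZeroDivisors (𝓞 F)) F) ^ a := by
  have : Fact p.Prime := ⟨hp⟩
  have h2 : ¬IsUnit (2 : 𝓞 F) :=
    fun h ↦ hQprime.ne_top (hQ ▸ Ideal.span_singleton_eq_top.mpr h)
  have hmu4 : Ideal.Quotient.mk (Ideal.span {(4 : 𝓞 F)}) mu = 1 := by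
    rw [← map_one (Ideal.Quotient.mk _), Ideal.Quotient.eq,
      show mu - 1 = -lam by linear_combination hsum, Ideal.neg_mem_iff]
    simpa [hQ, Ideal.span_singleton_pow, show (2 : 𝓞 F) ^ 2 = 4 by norm_num] using hval
  have hmuP := RingOfIntegers.mk_eq_one_of_norm_eq_one hdeg hram
    (RingOfIntegers.norm_eq_one_of_mk_span_four_eq_one h2 hmu hmu4)
  have hlamP : lam ∈ P := by
    rw [← Ideal.Quotient.eq_zero_iff_mem, eq_sub_of_add_eq hsum, map_sub, hmuP, map_one, sub_self]
  refine ⟨hlamP, fun a ha h ↦ ?_⟩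
  lift a to ℕ using (by omega) with k
  rw [zpow_natCast, ← coeIdeal_span_singleton, ← coeIdeal_pow, coeIdeal_inj] at h
  have hpP : (p : 𝓞 F) ∈ P :=
    Ideal.pow_le_self (pow_ne_zero n hp.ne_zero) (hram ▸ Ideal.mem_span_singleton_self _)
  have h2P : (2 : 𝓞 F) ∉ P := by
    have hcop : Nat.Coprime p 2 := (Nat.coprime_primes hp Nat.prime_two).mpr (by omega)
    exact_mod_cast Ideal.IsPrime.notMem_of_isCoprime_of_mem hcop.cast hpP
  refine Ideal.span_singleton_ne_pow_of_mem_of_not_le (fun hQP ↦ h2P ?_) hlamP k h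
  exact hQP (hQ ▸ Ideal.mem_span_singleton_self 2)

/-- p ≥ 5, F/ℚ Galois of degree p^n, p totally ramified (unique prime 𝔭),
2 inert with 𝔮 = 2O_F.  If λ + μ = 1 with ord_𝔮(λ) ≥ 2 and μ a unit, then
𝔭 ∣ λ; hence no {𝔮}-unit solution has ord_𝔮(λ) ≥ 2. -/
theorem stmt19 (p n : ℕ) (hp : p.Prime) (hp5 : 5 ≤ p) (hn : 1 ≤ n)
    (F : Type*) [Field F] [NumberField F] [IsGalois ℚ F]
    (hdeg : Module.finrank ℚ F = p ^ n)
    (P : Ideal (𝓞 F)) (hP : P.IsPrime)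
    (hram : Ideal.span {(p : 𝓞 F)} = P ^ (p ^ n))
    (Q : Ideal (𝓞 F)) (hQ : Q = Ideal.span {(2 : 𝓞 F)}) (hQprime : Q.IsPrime)
    (lam mu : 𝓞 F) (hsum : lam + mu = 1) (hval : lam ∈ Q ^ 2) (hmu : IsUnit mu) :
    lam ∈ P ∧
    ∀ a : ℤ, 2 ≤ a →
      spanSingleton (nonZeroDivisors (𝓞 F)) (algebraMap (𝓞 F) F lam)
        ≠ (Q : FractionalIdeal (nonZeroDivisors (𝓞 F)) F) ^ a :=
  stmt19_general p n hp hp5 F hdeg P hP hram Q hQ hQprime lam mu hsum hval hmu
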